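/- arXiv:1308.4083 — 2 statements merged into one kernel-verified Lean document; each statement's English description precedes it below -/
import Mathlib

section
/- In the Lie algebra n₁ above, the coframe (e^1,...,e^7) = (f^1+f^2, f^6, −f^5, f^3, √3 f^4, −√3 f^1, √3 f^7) satisfies dα = 0 and dβ = 0, where α = (e^{12}−e^{34})∧e^5+(e^{13}−e^{42})∧e^6+(e^{14}−e^{23})∧e^7−3e^{567} and β = −(e^{12}−e^{34})∧e^{67}−(e^{13}−e^{42})∧(e^7∧e^5)−(e^{14}−e^{23})∧e^{56}−3e^{1234}. -/
/- STATEMENT 9: in the Lie algebra n₁, the coframe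
   (e^1,…,e^7) = (f^1+f^2, f^6, −f^5, f^3, √3 f^4, −√3 f^1, √3 f^7)
   yields a harmonic SO(4)-structure: dα = 0 and dβ = 0. -/

noncomputable section

/-- `F i` is the covector `f^{i+1}` inside the exterior algebra of `(ℝ^7)^*`. -/
def F (i : Fin 7) : ExteriorAlgebra ℝ (Fin 7 → ℝ) :=
  ExteriorAlgebra.ι ℝ (Pi.single i 1)

/-- The coframe (e^1,…,e^7) = (f^1+f^2, f^6, −f^5, f^3, √3 f^4, −√3 f^1, √3 f^7). -/
def e : Fin 7 → ExteriorAlgebra ℝ (Fin 7 → ℝ) :=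
  ![F 0 + F 1, F 5, -F 4, F 2, Real.sqrt 3 • F 3, -(Real.sqrt 3 • F 0), Real.sqrt 3 • F 6]

/-- α = (e^{12}−e^{34})∧e^5 + (e^{13}−e^{42})∧e^6 + (e^{14}−e^{23})∧e^7 − 3e^{567}. -/
def α : ExteriorAlgebra ℝ (Fin 7 → ℝ) :=
  (e 0 * e 1 - e 2 * e 3) * e 4 + (e 0 * e 2 - e 3 * e 1) * e 5
    + (e 0 * e 3 - e 1 * e 2) * e 6 - (3:ℝ) • (e 4 * e 5 * e 6)

/-- β = −(e^{12}−e^{34})∧e^{67} − (e^{13}−e^{42})∧(e^7∧e^5) − (e^{14}−e^{23})∧e^{56} − 3e^{1234}. -/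
def β : ExteriorAlgebra ℝ (Fin 7 → ℝ) :=
  -((e 0 * e 1 - e 2 * e 3) * (e 5 * e 6))
    - (e 0 * e 2 - e 3 * e 1) * (e 6 * e 4)
    - (e 0 * e 3 - e 1 * e 2) * (e 4 * e 5)
    - (3:ℝ) • (e 0 * e 1 * e 2 * e 3)

/-! In the coframe `f`, `α` and `β` are `√3` and `3` times short combinations of monomials in
`u = f¹ + f²` and the `fⁱ`. The Leibniz rule turns `dα` and `dβ` into combinations of monomials
of degree 4 and 5, which cancel once every monomial is sorted into increasing order by
anticommutativity. -/

local notation "Λ" => ExteriorAlgebra ℝ (Fin 7 → ℝ)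

theorem ExteriorAlgebra.ι_mul_ι_anticomm {R M : Type*} [CommRing R] [AddCommGroup M]
    [Module R M] (x y : M) :
    ExteriorAlgebra.ι R x * ExteriorAlgebra.ι R y
      = -(ExteriorAlgebra.ι R y * ExteriorAlgebra.ι R x) :=
  eq_neg_of_add_eq_zero_left (ExteriorAlgebra.ι_add_mul_swap x y)

-- `n1Differential i = d f^{i+1}`: the structure equations of n₁, with 0-based indices.
def n1Differential : Fin 7 → Λ :=
  ![0, 0, F 1 * F 6, F 1 * F 6 + F 0 * F 6, F 0 * F 1, F 0 * F 3 + F 1 * F 2 + F 4 * F 6, 0]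

theorem F_mul_self (i : Fin 7) : F i * F i = 0 :=
  ExteriorAlgebra.ι_sq_zero _

theorem F_mul_F_mul_self (i : Fin 7) (x : Λ) : F i * (F i * x) = 0 := by
  rw [← mul_assoc, F_mul_self, zero_mul]

-- The guard `j < i` orients the rewrite, so that `simp` sorts monomials into increasing order.
theorem F_mul_F_of_lt {i j : Fin 7} (_ : j < i) : F i * F j = -(F j * F i) :=
  ExteriorAlgebra.ι_mul_ι_anticomm _ _

theorem F_mul_F_mul_of_lt {i j : Fin 7} (h : j < i) (x : Λ) :
    F i * (F j * x) = -(F j * (F i * x)) := by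
  rw [← mul_assoc, F_mul_F_of_lt h, neg_mul, mul_assoc]

theorem α_eq : α = √3 • ((((F 0 + F 1) * F 5 + F 4 * F 2) * F 3
    + ((F 0 + F 1) * F 4 + F 2 * F 5) * F 0 + ((F 0 + F 1) * F 2 + F 5 * F 4) * F 6)
    + (9 : ℝ) • (F 3 * F 0 * F 6)) := by
  have h : √3 * √3 = 3 := Real.mul_self_sqrt (by norm_num)
  simp only [α, e, Matrix.cons_val, smul_mul_assoc, mul_smul_comm, neg_mul, mul_neg, smul_smul,
    add_mul, sub_mul, mul_assoc]
  match_scalars <;> grind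

theorem β_eq : β = (3 : ℝ) • (((F 0 + F 1) * F 5 + F 4 * F 2) * F 0 * F 6
    + ((F 0 + F 1) * F 4 + F 2 * F 5) * F 6 * F 3 + ((F 0 + F 1) * F 2 + F 5 * F 4) * F 3 * F 0
    + (F 0 + F 1) * F 5 * F 4 * F 2) := by
  have h : √3 * √3 = 3 := Real.mul_self_sqrt (by norm_num)
  simp only [β, e, Matrix.cons_val, smul_mul_assoc, mul_smul_comm, neg_mul, mul_neg, smul_smul,
    add_mul, sub_mul, mul_assoc]
  match_scalars <;> grind

theorem map_α_eq_zero (d : Λ →ₗ[ℝ] Λ) (hF : ∀ i, d (F i) = n1Differential i)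
    (htriple : ∀ i j k : Fin 7,
      d (F i * F j * F k) = d (F i) * F j * F k - F i * d (F j) * F k + F i * F j * d (F k)) :
    d α = 0 := by
  rw [α_eq]
  simp only [add_mul, mul_add, map_add, map_smul, htriple, hF, n1Differential, Matrix.cons_val]
  simp (disch := decide) only [mul_assoc, F_mul_self, F_mul_F_mul_self, F_mul_F_of_lt,
    F_mul_F_mul_of_lt, mul_neg, neg_mul, neg_neg, mul_zero, zero_mul]
  module

theorem map_β_eq_zero (d : Λ →ₗ[ℝ] Λ) (hF : ∀ i, d (F i) = n1Differential i)
    (hquad : ∀ i j k l : Fin 7,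
      d (F i * F j * F k * F l)
        = d (F i) * F j * F k * F l - F i * d (F j) * F k * F l
          + F i * F j * d (F k) * F l - F i * F j * F k * d (F l)) :
    d β = 0 := by
  rw [β_eq]
  simp only [add_mul, mul_add, map_add, map_smul, hquad, hF, n1Differential, Matrix.cons_val]
  simp (disch := decide) only [mul_assoc, F_mul_self, F_mul_F_mul_self, F_mul_F_of_lt,
    F_mul_F_mul_of_lt, mul_neg, neg_mul, neg_neg, mul_zero, zero_mul]
  module

/-- Any linear extension `d` of the Chevalley–Eilenberg differential of n₁
(structure equations `df³ = f^{27}`, `df⁴ = f^{27}+f^{17}`, `df⁵ = f^{12}`,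
`df⁶ = f^{14}+f^{23}+f^{57}`, `df¹ = df² = df⁷ = 0`; 0-based indices) which is an
antiderivation on triple and quadruple products of generators satisfies dα = 0 = dβ. -/
theorem n1_harmonic_SO4
    (d : ExteriorAlgebra ℝ (Fin 7 → ℝ) →ₗ[ℝ] ExteriorAlgebra ℝ (Fin 7 → ℝ))
    (h0 : d (F 0) = 0) (h1 : d (F 1) = 0)
    (h2 : d (F 2) = F 1 * F 6)
    (h3 : d (F 3) = F 1 * F 6 + F 0 * F 6)
    (h4 : d (F 4) = F 0 * F 1)
    (h5 : d (F 5) = F 0 * F 3 + F 1 * F 2 + F 4 * F 6)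
    (h6 : d (F 6) = 0)
    (htriple : ∀ i j k : Fin 7,
      d (F i * F j * F k) = d (F i) * F j * F k - F i * d (F j) * F k + F i * F j * d (F k))
    (hquad : ∀ i j k l : Fin 7,
      d (F i * F j * F k * F l)
        = d (F i) * F j * F k * F l - F i * d (F j) * F k * F l
          + F i * F j * d (F k) * F l - F i * F j * F k * d (F l)) :
    d α = 0 ∧ d β = 0 := by
  have hF : ∀ i, d (F i) = n1Differential i := by
    intro i
    fin_cases i
    exacts [h0, h1, h2, h3, h4, h5, h6]
  exact ⟨map_α_eq_zero d hF htriple, map_β_eq_zero d hF hquad⟩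

end
end

section
/- Fix real numbers p, q, r with pq = 0, pr = 0, and r(q+2r) = 0. Then the structure equations de^j = r·(e_j ⌟ ω_s)∧w^s (summed over s=1,2,3), dw^s = p·ω_s + q·(w_s ⌟ w^{123}) on the 7-dimensional vector space with basis e_1,...,e_4,w_1,w_2,w_3 satisfy d² = 0, hence define a Lie algebra. -/
/-!
By the Leibniz rule, `d (d x)` for a generator `x` is a 3-form computed from the structure
equations alone. Expanding it, `d² e^j` is a combination of `p r` and `r (q + 2 r)` times
explicit 3-forms, and `d² w^s` is `p (q + 2 r) = p q + 2 p r` times one; all three coefficients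
vanish under the hypotheses.
-/

noncomputable section

/-- Generators of the exterior algebra: `E 0,…,E 3` are `e^1,…,e^4` and
`E 4, E 5, E 6` are `w^1, w^2, w^3`. -/
def E (i : Fin 7) : ExteriorAlgebra ℝ (Fin 7 → ℝ) :=
  ExteriorAlgebra.ι ℝ (Pi.single i 1)

theorem E_mul_self (i : Fin 7) : E i * E i = 0 := ExteriorAlgebra.ι_sq_zero _

theorem E_mul_E_mul_self (i : Fin 7) (x : ExteriorAlgebra ℝ (Fin 7 → ℝ)) :
    E i * (E i * x) = 0 := by
  rw [← mul_assoc, E_mul_self, zero_mul]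

theorem E_mul_comm (i j : Fin 7) : E i * E j = -(E j * E i) :=
  eq_neg_of_add_eq_zero_left (ExteriorAlgebra.ι_add_mul_swap _ _)

theorem E_mul_E_mul_comm (i j : Fin 7) (x : ExteriorAlgebra ℝ (Fin 7 → ℝ)) :
    E i * (E j * x) = -(E j * (E i * x)) := by
  rw [← mul_assoc, E_mul_comm, neg_mul, mul_assoc]

structure IsStructureDifferential (p q r : ℝ)
    (d : ExteriorAlgebra ℝ (Fin 7 → ℝ) →ₗ[ℝ] ExteriorAlgebra ℝ (Fin 7 → ℝ)) : Prop where
  d_e1 : d (E 0) = r • (E 1 * E 4 + E 2 * E 5 + E 3 * E 6)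
  d_e2 : d (E 1) = r • (-(E 0 * E 4) + E 3 * E 5 - E 2 * E 6)
  d_e3 : d (E 2) = r • (-(E 3 * E 4) - E 0 * E 5 + E 1 * E 6)
  d_e4 : d (E 3) = r • (E 2 * E 4 - E 1 * E 5 - E 0 * E 6)
  d_w1 : d (E 4) = p • (E 0 * E 1 - E 2 * E 3) + q • (E 5 * E 6)
  d_w2 : d (E 5) = p • (E 0 * E 2 - E 3 * E 1) + q • (E 6 * E 4)
  d_w3 : d (E 6) = p • (E 0 * E 3 - E 1 * E 2) + q • (E 4 * E 5)
  d_E_mul_E (i j : Fin 7) : d (E i * E j) = d (E i) * E j - E i * d (E j)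

def ddE (p q r : ℝ) : Fin 7 → ExteriorAlgebra ℝ (Fin 7 → ℝ) := ![
  (3 * (p * r)) • (E 1 * E 2 * E 3)
    - (r * (q + 2 * r)) • (E 1 * E 5 * E 6 + E 2 * E 6 * E 4 + E 3 * E 4 * E 5),
  (3 * (p * r)) • (E 3 * E 2 * E 0)
    - (r * (q + 2 * r)) • (-(E 0 * E 5 * E 6) + E 3 * E 6 * E 4 - E 2 * E 4 * E 5),
  (3 * (p * r)) • (E 0 * E 1 * E 3)
    - (r * (q + 2 * r)) • (-(E 3 * E 5 * E 6) - E 0 * E 6 * E 4 + E 1 * E 4 * E 5),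
  (3 * (p * r)) • (E 1 * E 0 * E 2)
    - (r * (q + 2 * r)) • (E 2 * E 5 * E 6 - E 1 * E 6 * E 4 - E 0 * E 4 * E 5),
  (p * (q + 2 * r)) • ((E 0 * E 2 - E 3 * E 1) * E 6 - (E 0 * E 3 - E 1 * E 2) * E 5),
  (p * (q + 2 * r)) • ((E 0 * E 3 - E 1 * E 2) * E 4 - (E 0 * E 1 - E 2 * E 3) * E 6),
  (p * (q + 2 * r)) • ((E 0 * E 1 - E 2 * E 3) * E 5 - (E 0 * E 2 - E 3 * E 1) * E 4)]

theorem IsStructureDifferential.d_d_E {p q r : ℝ}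
    {d : ExteriorAlgebra ℝ (Fin 7 → ℝ) →ₗ[ℝ] ExteriorAlgebra ℝ (Fin 7 → ℝ)}
    (hd : IsStructureDifferential p q r d) (i : Fin 7) : d (d (E i)) = ddE p q r i := by
  -- the listed swaps sort every monomial into increasing index order
  fin_cases i <;>
  simp only [ddE, Fin.reduceFinMk, Fin.zero_eta, Fin.mk_one, Matrix.cons_val,
    hd.d_e1, hd.d_e2, hd.d_e3, hd.d_e4, hd.d_w1, hd.d_w2, hd.d_w3, hd.d_E_mul_E,
    map_add, map_sub, map_neg, map_smul, smul_add, smul_sub, smul_neg, smul_smul,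
    add_mul, sub_mul, mul_add, mul_sub, neg_mul, mul_neg, neg_neg, mul_assoc, smul_mul_assoc,
    mul_smul_comm, neg_zero, smul_zero, add_zero, zero_add, sub_zero, zero_sub, mul_zero,
    E_mul_self, E_mul_E_mul_self,
    E_mul_comm 1 0, E_mul_comm 2 1, E_mul_comm 3 0, E_mul_comm 3 1, E_mul_comm 3 2,
    E_mul_comm 4 1, E_mul_comm 4 2, E_mul_comm 4 3, E_mul_comm 5 1, E_mul_comm 5 2,
    E_mul_comm 5 3, E_mul_comm 5 4, E_mul_comm 6 1, E_mul_comm 6 2, E_mul_comm 6 3,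
    E_mul_comm 6 4, E_mul_comm 6 5,
    E_mul_E_mul_comm 1 0, E_mul_E_mul_comm 2 0, E_mul_E_mul_comm 2 1, E_mul_E_mul_comm 3 0,
    E_mul_E_mul_comm 3 1, E_mul_E_mul_comm 3 2, E_mul_E_mul_comm 4 0, E_mul_E_mul_comm 4 1,
    E_mul_E_mul_comm 5 0, E_mul_E_mul_comm 5 1, E_mul_E_mul_comm 5 4] <;>
  match_scalars <;> ring

/-- For any linear map `d` with the prescribed values on generators
(`de^j = r Σ_s (e_j ⌟ ω_s) ∧ w^s`, `dw^s = p ω_s + q (w_s ⌟ w^{123})`, written out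
explicitly) which satisfies the antiderivation rule on products of two generators,
one has `d(d(generator)) = 0` for all generators; i.e. the equations define a Lie
algebra. -/
theorem structure_equations_define_lie_algebra
    (p q r : ℝ) (hpq : p * q = 0) (hpr : p * r = 0) (hr : r * (q + 2 * r) = 0)
    (d : ExteriorAlgebra ℝ (Fin 7 → ℝ) →ₗ[ℝ] ExteriorAlgebra ℝ (Fin 7 → ℝ))
    (he1 : d (E 0) = r • (E 1 * E 4 + E 2 * E 5 + E 3 * E 6))
    (he2 : d (E 1) = r • (-(E 0 * E 4) + E 3 * E 5 - E 2 * E 6))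
    (he3 : d (E 2) = r • (-(E 3 * E 4) - E 0 * E 5 + E 1 * E 6))
    (he4 : d (E 3) = r • (E 2 * E 4 - E 1 * E 5 - E 0 * E 6))
    (hw1 : d (E 4) = p • (E 0 * E 1 - E 2 * E 3) + q • (E 5 * E 6))
    (hw2 : d (E 5) = p • (E 0 * E 2 - E 3 * E 1) + q • (E 6 * E 4))
    (hw3 : d (E 6) = p • (E 0 * E 3 - E 1 * E 2) + q • (E 4 * E 5))
    (hpair : ∀ i j : Fin 7, d (E i * E j) = d (E i) * E j - E i * d (E j)) :
    ∀ i : Fin 7, d (d (E i)) = 0 := by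
  have hd : IsStructureDifferential p q r d := ⟨he1, he2, he3, he4, hw1, hw2, hw3, hpair⟩
  have hp : p * (q + 2 * r) = 0 := by linear_combination hpq + 2 * hpr
  intro i
  rw [hd.d_d_E i]
  fin_cases i <;> simp [ddE, hpr, hr, hp]

end
end
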